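/- Under the PART 3 setup, let R_{-i} ∈ ∏_{j≠i} 𝓡_j be a subprofile such that O_i(R_{-i}, 𝓡'_i) ≠ O_i(R_{-i}, 𝓡_i). If there exist an agent j ≠ i and a preference R̂_j ∈ 𝓡_j with O_i((R̂_j, R_{-{i,j}}), 𝓡'_i) = {x, z}, then for every preference R'_j ∈ 𝓡_j, O_i((R'_j, R_{-{i,j}}), 𝓡'_i) = r(f') and O_i((R'_j, R_{-{i,j}}), 𝓡_i) = r(f). -/

import Mathlib

/-!
Fix the reports of all agents other than `i` and `j`. Strategy-proofness for `i` makes `f` select,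
for each report of `j`, the best element (for `i`'s report) of `i`'s option set, a subset of
`{x, y, z}`. These option sets satisfy `O' = O \ {y}` and `y ∈ O → x ∈ O`, and they never contain
both `y` and `z` when `z` is fixed above `y` for `i`. Strategy-proofness for `j` says that,
whatever `i` reports, `j` weakly prefers the outcome of its own column to that of any other column.

Restricted to `{x, y, z}` this is a finite problem. Suppose `y ∈ O(R_j)` and `z ∈ O(R̂_j)` but
`O(R'_j) ≠ {x, y, z}`. An exhaustive search then finds an order on `{x, y, z}` that keeps every
comparison shared by `R_j`, `R̂_j` and `R'_j`. Since `j`'s domain is non-conditional, some report of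
`j` induces this order, yet no option set of `i` is compatible with the three given columns.
-/

/-- A preference is represented by its strict relation `P`, where `P a b` means
`a` is strictly preferred to `b`. -/
abbrev Pref (X : Type*) := X → X → Prop

/-- The universal domain: all strict linear orders (strict total orders) on `X`. -/
def univDomain (X : Type*) : Set (Pref X) := {P | IsStrictTotalOrder X P}

/-- `S(𝓑)`: the set of ordered pairs of distinct alternatives that are fixed
(ranked the same way) throughout the domain `𝓑`. -/
def fixedPairs {X : Type*} (B : Set (Pref X)) : Set (X × X) :=
  {p | p.1 ≠ p.2 ∧ ∀ P ∈ B, P p.1 p.2}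

/-- A preference domain is non-conditional if it consists exactly of the strict
linear orders respecting all of its fixed pairs. -/
def NonConditional {X : Type*} (B : Set (Pref X)) : Prop :=
  B = {P | P ∈ univDomain X ∧ ∀ p ∈ fixedPairs B, P p.1 p.2}

/-- `{x, y} ∈ S⁻¹(𝓑)`: the unordered pair `{x, y}` is a free pair of `𝓑`. -/
def FreePair {X : Type*} (B : Set (Pref X)) (x y : X) : Prop :=
  x ≠ y ∧ (x, y) ∉ fixedPairs B ∧ (y, x) ∉ fixedPairs B

/-- The profile `R` lies in the product domain `∏ i, 𝓡 i`. -/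
def InDomain {N X : Type*} (𝓡 : N → Set (Pref X)) (R : N → Pref X) : Prop :=
  ∀ i, R i ∈ 𝓡 i

/-- The range `r(f)` of a social choice rule `f` over the domain `𝓡`. -/
def scrRange {N X : Type*} (𝓡 : N → Set (Pref X)) (f : (N → Pref X) → X) : Set X :=
  {x | ∃ R, InDomain 𝓡 R ∧ f R = x}

/-- Strategy-proofness of `f` on the product domain `𝓡`: no agent `i` can, at any
profile of the domain, obtain a strictly preferred outcome by misreporting. -/
def StrategyProof {N X : Type*} [DecidableEq N] (𝓡 : N → Set (Pref X))
    (f : (N → Pref X) → X) : Prop :=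
  ∀ R, InDomain 𝓡 R → ∀ i, ∀ P' ∈ 𝓡 i, ¬ R i (f (Function.update R i P')) (f R)

/-- `f` is a dictatorship of agent `i` on the domain `𝓡`: at every profile of the
domain, `f` selects an outcome weakly preferred by `i` to every element of the range. -/
def Dictatorship {N X : Type*} (𝓡 : N → Set (Pref X)) (f : (N → Pref X) → X)
    (i : N) : Prop :=
  ∀ R, InDomain 𝓡 R → ∀ x ∈ scrRange 𝓡 f, f R = x ∨ R i (f R) x

/-- `f` is non-dictatorial on the domain `𝓡`. -/
def NonDictatorial {N X : Type*} (𝓡 : N → Set (Pref X)) (f : (N → Pref X) → X) : Prop :=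
  ∀ i, ¬ Dictatorship 𝓡 f i

/-- The option set `O_i(R_{-i}, 𝓑)` of agent `i` at the subprofile `R_{-i}`
relative to the set of preferences `𝓑`. -/
def optionSet {N X : Type*} [DecidableEq N] (f : (N → Pref X) → X) (i : N)
    (R : N → Pref X) (B : Set (Pref X)) : Set X :=
  {x | ∃ P ∈ B, f (Function.update R i P) = x}


open Function Relation

theorem exists_isStrictTotalOrder_of_acyclic {α : Type*} {r : α → α → Prop}
    (hr : ∀ a, ¬ TransGen r a a) : ∃ s, IsStrictTotalOrder α s ∧ ∀ a b, r a b → s a b := by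
  have : IsPartialOrder α (ReflTransGen r) :=
    { refl := fun _ => .refl
      trans := fun _ _ _ => ReflTransGen.trans
      antisymm := fun a b hab hba => by
        rcases reflTransGen_iff_eq_or_transGen.1 hab with rfl | hab
        · rfl
        · rcases reflTransGen_iff_eq_or_transGen.1 hba with rfl | hba
          · rfl
          · exact (hr b (hba.trans hab)).elim }
  obtain ⟨s, hs, hrs⟩ := extend_partialOrder (ReflTransGen r)
  refine ⟨fun a b => s a b ∧ a ≠ b,
    { trichotomous := fun a b hab hba => ?_
      irrefl := fun a h => h.2 rfl
      trans := fun a b c hab hbc => ⟨hs.trans _ _ _ hab.1 hbc.1, ?_⟩ },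
    fun a b hab => ⟨hrs _ _ (.single hab), ?_⟩⟩
  · by_contra hne
    rcases hs.total a b with h | h
    exacts [hab ⟨h, hne⟩, hba ⟨h, Ne.symm hne⟩]
  · rintro rfl
    exact hbc.2 (hs.antisymm _ _ hbc.1 hab.1)
  · rintro rfl
    exact hr a (.single hab)

/-- Paths of `t ⊔ e` contain at most one `e`-block, since no `e`-step can follow a `t`-step
that follows an `e`-step. -/
theorem transGen_sup_irrefl {α : Type*} {t e : α → α → Prop} [IsTrans α t] [IsTrans α e]
    [Std.Irrefl t] [Std.Irrefl e] (hete : ∀ a b c d, e a b → t b c → e c d → False) (a : α) :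
    ¬ TransGen (t ⊔ e) a a := by
  have hpath : ∀ {a b}, TransGen (t ⊔ e) a b →
      t a b ∨ ∃ c d, ReflTransGen t a c ∧ e c d ∧ ReflTransGen t d b := by
    intro a b h
    induction h with
    | single h => exact h.imp id fun h => ⟨_, _, .refl, h, .refl⟩
    | tail _ hbc ih =>
      rcases ih, hbc with ⟨hab | ⟨c, d, hac, hcd, hdb⟩, hbc | hbc⟩
      · exact .inl (trans_of t hab hbc)
      · exact .inr ⟨_, _, .single hab, hbc, .refl⟩
      · exact .inr ⟨c, d, hac, hcd, hdb.tail hbc⟩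
      · rcases reflTransGen_iff_eq_or_transGen.1 hdb with rfl | hdb
        · exact .inr ⟨c, _, hac, trans_of e hcd hbc, .refl⟩
        · exact (hete _ _ _ _ hcd (transGen_eq_self (r := t) ▸ hdb) hbc).elim
  intro haa
  rcases hpath haa with h | ⟨c, d, hac, hcd, hda⟩
  · exact irrefl_of t a h
  · rcases reflTransGen_iff_eq_or_transGen.1 (hda.trans hac) with rfl | hdc
    · exact irrefl_of e _ hcd
    · exact hete _ _ _ _ hcd (transGen_eq_self (r := t) ▸ hdc) hcd

section NonConditional

variable {X : Type*} {B : Set (Pref X)}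

theorem mem_fixedPairs {a b : X} : (a, b) ∈ fixedPairs B ↔ a ≠ b ∧ ∀ P ∈ B, P a b := Iff.rfl

theorem NonConditional.isStrictTotalOrder (hB : NonConditional B) {P : Pref X} (hP : P ∈ B) :
    IsStrictTotalOrder X P := by
  rw [hB] at hP
  exact hP.1

theorem NonConditional.exists_mem_of_not_mem_fixedPairs (hB : NonConditional B) {a b : X}
    (hab : a ≠ b) (h : (a, b) ∉ fixedPairs B) : ∃ P ∈ B, P b a := by
  simp only [mem_fixedPairs, not_and, not_forall] at h
  obtain ⟨P, hP, hPab⟩ := h hab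
  have := hB.isStrictTotalOrder hP
  exact ⟨P, hP, ((trichotomous_of P a b).resolve_left hPab).resolve_left hab⟩

theorem NonConditional.mem_fixedPairs_trans (hB : NonConditional B) {P₀ : Pref X} (hP₀ : P₀ ∈ B)
    {a b c : X} (hab : (a, b) ∈ fixedPairs B) (hbc : (b, c) ∈ fixedPairs B) :
    (a, c) ∈ fixedPairs B := by
  refine ⟨?_, fun P hP => (hB.isStrictTotalOrder hP).trans _ _ _ (hab.2 P hP) (hbc.2 P hP)⟩
  rintro (rfl : a = c)
  have := hB.isStrictTotalOrder hP₀
  exact asymm_of P₀ (hab.2 P₀ hP₀) (hbc.2 P₀ hP₀)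

/-- Extend the fixed pairs together with the ranking `u > v > w` to a linear order. -/
theorem NonConditional.exists_mem_chain (hB : NonConditional B) {u v w : X}
    (huv : u ≠ v) (hvw : v ≠ w) (huw : u ≠ w) (hvu : (v, u) ∉ fixedPairs B)
    (hwv : (w, v) ∉ fixedPairs B) (hwu : (w, u) ∉ fixedPairs B) :
    ∃ P ∈ B, P u v ∧ P v w ∧ P u w := by
  obtain ⟨P₀, hP₀, -⟩ := hB.exists_mem_of_not_mem_fixedPairs huv.symm hvu
  let t a b := (a, b) ∈ fixedPairs B
  let e a b := (a = u ∧ b = v) ∨ (a = v ∧ b = w) ∨ (a = u ∧ b = w)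
  have : IsTrans X t := ⟨fun _ _ _ => hB.mem_fixedPairs_trans hP₀⟩
  have : Std.Irrefl t := ⟨fun _ h => h.1 rfl⟩
  have : IsTrans X e := ⟨by
    rintro a b c (⟨rfl, rfl⟩ | ⟨rfl, rfl⟩ | ⟨rfl, rfl⟩) (⟨h, rfl⟩ | ⟨h, rfl⟩ | ⟨h, rfl⟩) <;>
      simp_all [e]⟩
  have : Std.Irrefl e := ⟨by rintro a (⟨rfl, h⟩ | ⟨rfl, h⟩ | ⟨rfl, h⟩) <;> simp_all⟩
  have hete : ∀ a b c d, e a b → t b c → e c d → False := by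
    rintro a b c d (⟨-, rfl⟩ | ⟨-, rfl⟩ | ⟨-, rfl⟩) hbc (⟨rfl, -⟩ | ⟨rfl, -⟩ | ⟨rfl, -⟩) <;>
      first | exact hvu hbc | exact hwv hbc | exact hwu hbc | exact irrefl_of t _ hbc
  obtain ⟨s, hs, hle⟩ := exists_isStrictTotalOrder_of_acyclic (transGen_sup_irrefl hete)
  refine ⟨s, ?_, hle _ _ (.inr (.inl ⟨rfl, rfl⟩)), hle _ _ (.inr (.inr (.inl ⟨rfl, rfl⟩))),
    hle _ _ (.inr (.inr (.inr ⟨rfl, rfl⟩)))⟩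
  rw [hB]
  exact ⟨hs, fun p hp => hle _ _ (.inl hp)⟩

theorem FreePair.of_fixedPairs_subset {B' : Set (Pref X)} (h : fixedPairs B ⊆ fixedPairs B')
    {a b : X} (hab : FreePair B' a b) : FreePair B a b :=
  ⟨hab.1, fun h' => hab.2.1 (h h'), fun h' => hab.2.2 (h h')⟩

end NonConditional

section StrategyProof

variable {N X : Type*} [DecidableEq N] {𝓡 : N → Set (Pref X)} {f : (N → Pref X) → X} {i : N}
  {Q : N → Pref X} {P : Pref X} {a b : X}

theorem inDomain_update (hQ : ∀ k, k ≠ i → Q k ∈ 𝓡 k) (hP : P ∈ 𝓡 i) :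
    InDomain 𝓡 (update Q i P) := by
  intro k
  rcases eq_or_ne k i with rfl | hk
  · simpa
  · simpa [hk] using hQ k hk

theorem update_mem_of_ne {j : N} {R : N → Pref X} (hR : ∀ k, k ≠ i → R k ∈ 𝓡 k)
    (hP : P ∈ 𝓡 j) : ∀ k, k ≠ i → update R j P k ∈ 𝓡 k := by
  intro k hk
  rcases eq_or_ne k j with rfl | hkj
  · simpa
  · simpa [hkj] using hR k hk

theorem optionSet_subset_scrRange (hQ : ∀ k, k ≠ i → Q k ∈ 𝓡 k) :
    optionSet f i Q (𝓡 i) ⊆ scrRange 𝓡 f := by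
  rintro _ ⟨P, hP, rfl⟩
  exact ⟨_, inDomain_update hQ hP, rfl⟩

theorem optionSet_mono {B B' : Set (Pref X)} (h : B' ⊆ B) :
    optionSet f i Q B' ⊆ optionSet f i Q B := by
  rintro _ ⟨P, hP, rfl⟩
  exact ⟨P, h hP, rfl⟩

theorem StrategyProof.not_prefers_of_mem_optionSet (hSP : StrategyProof 𝓡 f)
    (hQ : ∀ k, k ≠ i → Q k ∈ 𝓡 k) (hP : P ∈ 𝓡 i) (ha : a ∈ optionSet f i Q (𝓡 i)) :
    ¬ P a (f (update Q i P)) := by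
  obtain ⟨P', hP', rfl⟩ := ha
  simpa using hSP _ (inDomain_update hQ hP) i P' hP'

theorem StrategyProof.not_prefers_update_update (hSP : StrategyProof 𝓡 f) {j : N} (hji : j ≠ i)
    {R : N → Pref X} (hR : ∀ k, k ≠ i → R k ∈ 𝓡 k) {Ra Rb : Pref X} (hRa : Ra ∈ 𝓡 j)
    (hRb : Rb ∈ 𝓡 j) (hP : P ∈ 𝓡 i) :
    ¬ Ra (f (update (update R j Rb) i P)) (f (update (update R j Ra) i P)) := by
  have := hSP _ (inDomain_update (update_mem_of_ne hR hRa) hP) j Rb hRb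
  rwa [update_comm hji.symm, update_idem, update_of_ne hji, update_self] at this

theorem StrategyProof.not_mem_fixedPairs_of_mem_optionSet (hSP : StrategyProof 𝓡 f)
    (hQ : ∀ k, k ≠ i → Q k ∈ 𝓡 k) {B : Set (Pref X)} (hB : B ⊆ 𝓡 i)
    (ha : a ∈ optionSet f i Q (𝓡 i)) (hb : b ∈ optionSet f i Q B) : (a, b) ∉ fixedPairs B := by
  obtain ⟨P, hP, rfl⟩ := hb
  exact fun h => hSP.not_prefers_of_mem_optionSet hQ (hB hP) ha (h.2 P hP)

theorem StrategyProof.freePair_of_mem_optionSet (hSP : StrategyProof 𝓡 f)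
    (hQ : ∀ k, k ≠ i → Q k ∈ 𝓡 k) {B : Set (Pref X)} (hB : B ⊆ 𝓡 i)
    (ha : a ∈ optionSet f i Q B) (hb : b ∈ optionSet f i Q B) (hab : a ≠ b) : FreePair B a b :=
  ⟨hab, hSP.not_mem_fixedPairs_of_mem_optionSet hQ hB (optionSet_mono hB ha) hb,
    hSP.not_mem_fixedPairs_of_mem_optionSet hQ hB (optionSet_mono hB hb) ha⟩

theorem StrategyProof.mem_optionSet_of_prefers (hSP : StrategyProof 𝓡 f)
    (hQ : ∀ k, k ≠ i → Q k ∈ 𝓡 k) {B : Set (Pref X)} (hB : B ⊆ 𝓡 i)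
    (ha : a ∈ optionSet f i Q (𝓡 i)) (hsub : optionSet f i Q B ⊆ {a, b}) (hP : P ∈ B)
    (hab : P a b) : a ∈ optionSet f i Q B := by
  have hmem : f (update Q i P) ∈ optionSet f i Q B := ⟨P, hP, rfl⟩
  rcases hsub hmem with h | h
  · exact h ▸ hmem
  · exact (hSP.not_prefers_of_mem_optionSet hQ (hB hP) ha (h ▸ hab)).elim

end StrategyProof

namespace Three

/-- The six strict linear orders of `Fin 3`; `rank p a` is the position of `a` in the `p`-th one,
`0` being the top. -/
def rank : Fin 6 → Fin 3 → Fin 3 :=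
  ![![0, 1, 2], ![0, 2, 1], ![1, 0, 2], ![2, 0, 1], ![1, 2, 0], ![2, 1, 0]]

def Prefers (p : Fin 6) (a b : Fin 3) : Prop := rank p a < rank p b

instance (p : Fin 6) : DecidableRel (Prefers p) := fun a b =>
  inferInstanceAs (Decidable (rank p a < rank p b))

def Chain (u v w a b : Fin 3) : Prop := (a = u ∧ b = v) ∨ (a = v ∧ b = w) ∨ (a = u ∧ b = w)

instance (u v w a b : Fin 3) : Decidable (Chain u v w a b) := by
  unfold Chain; infer_instance

theorem prefers_trichotomous : ∀ p a b, Prefers p a b ∨ a = b ∨ Prefers p b a := by decide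

theorem exists_chain_iff_prefers : ∀ p, ∃ u v w, u ≠ v ∧ v ≠ w ∧ u ≠ w ∧
    ∀ a b, Prefers p a b ↔ Chain u v w a b := by
  decide

theorem exists_prefers_iff_chain : ∀ u v w, u ≠ v → v ≠ w → u ≠ w →
    ∃ p, ∀ a b, Prefers p a b ↔ Chain u v w a b := by
  decide

/- Positions `0, 1, 2` stand for `x, y, z`; `σ` records whether `(z, y)` is a fixed pair of agent
`i`; a menu is `i`'s option set in one column, i.e. for one report of agent `j`. -/

def Allowed (σ : Bool) (q : Fin 6) : Prop := σ = true → Prefers q 2 1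

def Admissible (σ : Bool) (m : Finset (Fin 3)) : Prop :=
  m.Nonempty ∧ (1 ∈ m → 0 ∈ m) ∧ (σ = true → ¬ (1 ∈ m ∧ 2 ∈ m))

def IsBest (q : Fin 6) (m : Finset (Fin 3)) (u : Fin 3) : Prop := u ∈ m ∧ ∀ w ∈ m, ¬ Prefers q w u

/-- Whatever admissible order `q` agent `i` reports, agent `j` with order `pa` facing menu `ma`
does not gain by switching to the column whose menu is `mb`. -/
def NoGain (σ : Bool) (pa : Fin 6) (ma mb : Finset (Fin 3)) : Prop :=
  ∀ q, Allowed σ q → ∃ u v, IsBest q ma u ∧ IsBest q mb v ∧ ¬ Prefers pa v u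

def Consistent (σ : Bool) (pa : Fin 6) (ma : Finset (Fin 3)) (pb : Fin 6) (mb : Finset (Fin 3)) :
    Prop :=
  NoGain σ pa ma mb ∧ NoGain σ pb mb ma

instance (σ : Bool) (q : Fin 6) : Decidable (Allowed σ q) := by
  unfold Allowed; infer_instance

instance (σ : Bool) (m : Finset (Fin 3)) : Decidable (Admissible σ m) := by
  unfold Admissible; infer_instance

instance (q : Fin 6) (m : Finset (Fin 3)) (u : Fin 3) : Decidable (IsBest q m u) := by
  unfold IsBest; infer_instance

instance (σ : Bool) (pa : Fin 6) (ma mb : Finset (Fin 3)) : Decidable (NoGain σ pa ma mb) := by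
  unfold NoGain; infer_instance

instance (σ : Bool) (pa : Fin 6) (ma : Finset (Fin 3)) (pb : Fin 6) (mb : Finset (Fin 3)) :
    Decidable (Consistent σ pa ma pb mb) := by
  unfold Consistent; infer_instance

theorem exists_blocking_order : ∀ σ : Bool, ∀ m₁ m₂ m₃ : Finset (Fin 3), 1 ∈ m₁ → 2 ∈ m₂ →
    m₃ ≠ Finset.univ → Admissible σ m₁ → Admissible σ m₂ → Admissible σ m₃ →
    ∀ p₁ p₂ p₃ : Fin 6, Consistent σ p₁ m₁ p₂ m₂ → Consistent σ p₁ m₁ p₃ m₃ →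
      Consistent σ p₂ m₂ p₃ m₃ →
    ∃ p₄ : Fin 6, (∀ a b, Prefers p₁ a b → Prefers p₂ a b → Prefers p₃ a b → Prefers p₄ a b) ∧
      ∀ m₄, Admissible σ m₄ →
        ¬ (Consistent σ p₄ m₄ p₁ m₁ ∧ Consistent σ p₄ m₄ p₂ m₂ ∧ Consistent σ p₄ m₄ p₃ m₃) := by
  decide

section Codes

variable {X : Type*} (e : Fin 3 → X)

def Codes (p : Fin 6) (P : Pref X) : Prop := ∀ a b, Prefers p a b ↔ P (e a) (e b)

open Classical in
noncomputable def menu (O : Set X) : Finset (Fin 3) := Finset.univ.filter (e · ∈ O)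

variable {e}

@[simp]
theorem mem_menu {O : Set X} {k : Fin 3} : k ∈ menu e O ↔ e k ∈ O := by
  simp [menu]

theorem codes_of_le {P : Pref X} [IsStrictTotalOrder X P] {p : Fin 6}
    (h : ∀ a b, Prefers p a b → P (e a) (e b)) : Codes e p P := by
  refine fun a b => ⟨h a b, fun hab => ?_⟩
  rcases prefers_trichotomous p a b with h' | rfl | h'
  · exact h'
  · exact (irrefl_of P _ hab).elim
  · exact (asymm_of P hab (h _ _ h')).elim

theorem exists_codes (he : Injective e) (P : Pref X) [IsStrictTotalOrder X P] :
    ∃ p, Codes e p P := by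
  have htot : ∀ a b, a ≠ b → P (e a) (e b) ∨ P (e b) (e a) := fun a b hab => by
    rcases trichotomous_of P (e a) (e b) with h | h | h
    exacts [.inl h, (hab (he h)).elim, .inr h]
  obtain ⟨u, v, w, huv, hvw⟩ : ∃ u v w, P (e u) (e v) ∧ P (e v) (e w) := by
    rcases htot 0 1 (by decide) with h01 | h10 <;> rcases htot 1 2 (by decide) with h12 | h21 <;>
      rcases htot 0 2 (by decide) with h02 | h20
    · exact ⟨0, 1, 2, h01, h12⟩
    · exact (asymm_of P (trans_of P h01 h12) h20).elim
    · exact ⟨0, 2, 1, h02, h21⟩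
    · exact ⟨2, 0, 1, h20, h01⟩
    · exact ⟨1, 0, 2, h10, h02⟩
    · exact ⟨1, 2, 0, h12, h20⟩
    · exact (asymm_of P (trans_of P h10 h02) h21).elim
    · exact ⟨2, 1, 0, h21, h10⟩
  have hne : ∀ {a b}, P (e a) (e b) → a ≠ b := fun h hab => irrefl_of P _ (hab ▸ h)
  obtain ⟨p, hp⟩ := exists_prefers_iff_chain u v w (hne huv) (hne hvw)
    (hne (trans_of P huv hvw))
  refine ⟨p, codes_of_le fun a b hab => ?_⟩
  rcases (hp a b).1 hab with ⟨rfl, rfl⟩ | ⟨rfl, rfl⟩ | ⟨rfl, rfl⟩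
  exacts [huv, hvw, trans_of P huv hvw]

theorem _root_.NonConditional.exists_mem_codes {B : Set (Pref X)} (hB : NonConditional B)
    (he : Injective e) {p : Fin 6} (hp : ∀ a b, Prefers p a b → (e b, e a) ∉ fixedPairs B) :
    ∃ P ∈ B, Codes e p P := by
  obtain ⟨u, v, w, huv, hvw, huw, hchain⟩ := exists_chain_iff_prefers p
  have hp' : ∀ {a b}, Chain u v w a b → (e b, e a) ∉ fixedPairs B :=
    fun h => hp _ _ ((hchain _ _).2 h)
  obtain ⟨P, hP, h₁, h₂, h₃⟩ := hB.exists_mem_chain (he.ne huv) (he.ne hvw) (he.ne huw)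
    (hp' (.inl ⟨rfl, rfl⟩)) (hp' (.inr (.inl ⟨rfl, rfl⟩))) (hp' (.inr (.inr ⟨rfl, rfl⟩)))
  have := hB.isStrictTotalOrder hP
  refine ⟨P, hP, codes_of_le fun a b hab => ?_⟩
  rcases (hchain a b).1 hab with ⟨rfl, rfl⟩ | ⟨rfl, rfl⟩ | ⟨rfl, rfl⟩
  exacts [h₁, h₂, h₃]

variable {x y z : X}

theorem injective_vec (hxy : x ≠ y) (hxz : x ≠ z) (hyz : y ≠ z) : Injective ![x, y, z] := by
  intro a b h
  fin_cases a <;> fin_cases b <;> simp_all [eq_comm]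

theorem exists_vec_eq_of_mem {a : X} (h : a ∈ ({x, y, z} : Set X)) : ∃ k, ![x, y, z] k = a := by
  rcases h with rfl | rfl | rfl
  exacts [⟨0, rfl⟩, ⟨1, rfl⟩, ⟨2, rfl⟩]

theorem _root_.NonConditional.exists_mem_codes_of_allowed {B : Set (Pref X)}
    (hB : NonConditional B) (he : Injective ![x, y, z]) (hxy : FreePair B x y)
    (hxz : FreePair B x z) (hyz : (y, z) ∉ fixedPairs B) {σ : Bool}
    (hσ : (z, y) ∈ fixedPairs B → σ = true) {q : Fin 6} (hq : Allowed σ q) :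
    ∃ P ∈ B, Codes ![x, y, z] q P := by
  refine hB.exists_mem_codes he fun a b hab hba => ?_
  fin_cases a <;> fin_cases b
  all_goals first
    | exact hba.1 rfl | exact hxy.2.1 hba | exact hxy.2.2 hba | exact hxz.2.1 hba
    | exact hxz.2.2 hba | exact hyz hba | exact lt_asymm hab (hq (hσ hba))

end Codes

end Three

section OptionSets

open Three

variable {N X : Type*} [DecidableEq N] {𝓡 : N → Set (Pref X)} {f : (N → Pref X) → X} {i : N}
  {Q : N → Pref X} {B : Set (Pref X)} {x y z : X}

theorem StrategyProof.optionSet_eq_diff (hSP : StrategyProof 𝓡 f) (hQ : ∀ k, k ≠ i → Q k ∈ 𝓡 k)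
    (hNC : NonConditional B) (hB : B ⊆ 𝓡 i) (hsub : optionSet f i Q B ⊆ {x, z})
    (hrange : optionSet f i Q (𝓡 i) ⊆ {x, y, z}) (hxy : x ≠ y) (hzy : z ≠ y)
    (hxz : FreePair B x z) :
    optionSet f i Q B = optionSet f i Q (𝓡 i) \ {y} := by
  refine Set.Subset.antisymm (fun a ha => ⟨optionSet_mono hB ha, ?_⟩) ?_
  · rintro (rfl : a = y)
    rcases hsub ha with h | h
    exacts [hxy h.symm, hzy h.symm]
  · rintro a ⟨ha, hay⟩
    rcases hrange ha with rfl | rfl | rfl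
    · obtain ⟨P, hP, hPa⟩ := hNC.exists_mem_of_not_mem_fixedPairs hxz.1.symm hxz.2.2
      exact hSP.mem_optionSet_of_prefers hQ hB ha hsub hP hPa
    · exact (hay rfl).elim
    · obtain ⟨P, hP, hPa⟩ := hNC.exists_mem_of_not_mem_fixedPairs hxz.1 hxz.2.1
      exact hSP.mem_optionSet_of_prefers hQ hB ha (Set.pair_comm a x ▸ hsub) hP hPa

theorem StrategyProof.mem_optionSet_of_mem_of_subset_pair (hSP : StrategyProof 𝓡 f)
    (hQ : ∀ k, k ≠ i → Q k ∈ 𝓡 k) (hNC : NonConditional B) (hB : B ⊆ 𝓡 i) (hne : B.Nonempty)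
    (hsub : optionSet f i Q B ⊆ {x, z}) (hyz : y ≠ z)
    (hzy : (z, y) ∈ fixedPairs B → (z, y) ∈ fixedPairs (𝓡 i))
    (hy : y ∈ optionSet f i Q (𝓡 i)) : x ∈ optionSet f i Q (𝓡 i) := by
  by_contra hx
  have hfz : ∀ {P}, P ∈ B → f (update Q i P) = z := fun hP => by
    have hmem : f (update Q i _) ∈ optionSet f i Q B := ⟨_, hP, rfl⟩
    rcases hsub hmem with h | h
    exacts [(hx (h ▸ optionSet_mono hB hmem)).elim, h]
  obtain ⟨P₀, hP₀⟩ := hne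
  have hz : z ∈ optionSet f i Q (𝓡 i) := ⟨P₀, hB hP₀, hfz hP₀⟩
  obtain ⟨P, hP, hPyz⟩ := hNC.exists_mem_of_not_mem_fixedPairs hyz.symm fun h =>
    hSP.not_mem_fixedPairs_of_mem_optionSet hQ subset_rfl hz hy (hzy h)
  exact hSP.not_prefers_of_mem_optionSet hQ (hB hP) hy (hfz hP ▸ hPyz)

theorem StrategyProof.admissible_menu (hSP : StrategyProof 𝓡 f) (hQ : ∀ k, k ≠ i → Q k ∈ 𝓡 k)
    (hne : (𝓡 i).Nonempty) (hrange : scrRange 𝓡 f ⊆ {x, y, z})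
    (hyx : y ∈ optionSet f i Q (𝓡 i) → x ∈ optionSet f i Q (𝓡 i)) {σ : Bool}
    (hσ : σ = true → (z, y) ∈ fixedPairs (𝓡 i)) :
    Admissible σ (menu ![x, y, z] (optionSet f i Q (𝓡 i))) := by
  refine ⟨?_, by simpa using hyx, fun h ⟨hy, hz⟩ => ?_⟩
  · obtain ⟨P, hP⟩ := hne
    have hmem : f (update Q i P) ∈ optionSet f i Q (𝓡 i) := ⟨P, hP, rfl⟩
    obtain ⟨k, hk⟩ := exists_vec_eq_of_mem (hrange (optionSet_subset_scrRange hQ hmem))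
    exact ⟨k, mem_menu.2 (hk ▸ hmem)⟩
  · exact hSP.not_mem_fixedPairs_of_mem_optionSet hQ subset_rfl (mem_menu.1 hz) (mem_menu.1 hy)
      (hσ h)

theorem StrategyProof.exists_isBest_menu (hSP : StrategyProof 𝓡 f)
    (hQ : ∀ k, k ≠ i → Q k ∈ 𝓡 k) (hrange : scrRange 𝓡 f ⊆ {x, y, z}) {P : Pref X}
    (hP : P ∈ 𝓡 i) {q : Fin 6} (hq : Codes ![x, y, z] q P) :
    ∃ u, ![x, y, z] u = f (update Q i P) ∧
      IsBest q (menu ![x, y, z] (optionSet f i Q (𝓡 i))) u := by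
  have hmem : f (update Q i P) ∈ optionSet f i Q (𝓡 i) := ⟨P, hP, rfl⟩
  obtain ⟨u, hu⟩ := exists_vec_eq_of_mem (hrange (optionSet_subset_scrRange hQ hmem))
  refine ⟨u, hu, mem_menu.2 (hu ▸ hmem), fun w hw hwu => ?_⟩
  exact hSP.not_prefers_of_mem_optionSet hQ hP (mem_menu.1 hw) (hu ▸ (hq w u).1 hwu)

theorem StrategyProof.noGain_menu (hSP : StrategyProof 𝓡 f) {j : N} (hji : j ≠ i)
    {R : N → Pref X} (hR : ∀ k, k ≠ i → R k ∈ 𝓡 k) (hrange : scrRange 𝓡 f ⊆ {x, y, z})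
    {σ : Bool} (hreal : ∀ q, Allowed σ q → ∃ P ∈ 𝓡 i, Codes ![x, y, z] q P)
    {Ra Rb : Pref X} (hRa : Ra ∈ 𝓡 j) (hRb : Rb ∈ 𝓡 j) {pa : Fin 6}
    (hpa : Codes ![x, y, z] pa Ra) :
    NoGain σ pa (menu ![x, y, z] (optionSet f i (update R j Ra) (𝓡 i)))
      (menu ![x, y, z] (optionSet f i (update R j Rb) (𝓡 i))) := by
  intro q hq
  obtain ⟨P, hP, hqP⟩ := hreal q hq
  obtain ⟨u, hu, hbu⟩ := hSP.exists_isBest_menu (update_mem_of_ne hR hRa) hrange hP hqP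
  obtain ⟨v, hv, hbv⟩ := hSP.exists_isBest_menu (update_mem_of_ne hR hRb) hrange hP hqP
  refine ⟨u, v, hbu, hbv, fun hvu => ?_⟩
  exact hSP.not_prefers_update_update hji hR hRa hRb hP (hu ▸ hv ▸ (hpa v u).1 hvu)

end OptionSets

open Three in
theorem StrategyProof.optionSet_eq_triple {N X : Type*} [DecidableEq N] {𝓡 : N → Set (Pref X)}
    {f : (N → Pref X) → X} (hSP : StrategyProof 𝓡 f) (hNC : ∀ k, NonConditional (𝓡 k))
    {i j : N} (hji : j ≠ i) {R : N → Pref X} (hR : ∀ k, k ≠ i → R k ∈ 𝓡 k) {x y z : X}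
    (he : Injective ![x, y, z]) (hrange : scrRange 𝓡 f ⊆ {x, y, z})
    (hxy : FreePair (𝓡 i) x y) (hxz : FreePair (𝓡 i) x z) (hyz : (y, z) ∉ fixedPairs (𝓡 i))
    (hyx_mem : ∀ Q, (∀ k, k ≠ i → Q k ∈ 𝓡 k) →
      y ∈ optionSet f i Q (𝓡 i) → x ∈ optionSet f i Q (𝓡 i))
    {R₁ R₂ R₃ : Pref X} (hR₁ : R₁ ∈ 𝓡 j) (hR₂ : R₂ ∈ 𝓡 j) (hR₃ : R₃ ∈ 𝓡 j)
    (hy : y ∈ optionSet f i (update R j R₁) (𝓡 i))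
    (hz : z ∈ optionSet f i (update R j R₂) (𝓡 i)) :
    optionSet f i (update R j R₃) (𝓡 i) = {x, y, z} := by
  classical
  obtain ⟨P₀, hP₀, -⟩ := id hy
  let σ := decide ((z, y) ∈ fixedPairs (𝓡 i))
  let m (R' : Pref X) := menu ![x, y, z] (optionSet f i (update R j R') (𝓡 i))
  have hreal : ∀ q, Allowed σ q → ∃ P ∈ 𝓡 i, Codes ![x, y, z] q P := fun q =>
    (hNC i).exists_mem_codes_of_allowed he hxy hxz hyz (by simp [σ])
  have hadm : ∀ R' ∈ 𝓡 j, Admissible σ (m R') := fun R' hR' =>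
    have hQ := update_mem_of_ne hR hR'
    hSP.admissible_menu hQ ⟨P₀, hP₀⟩ hrange (hyx_mem _ hQ) (by simp [σ])
  have hcons : ∀ Ra ∈ 𝓡 j, ∀ Rb ∈ 𝓡 j, ∀ pa pb, Codes ![x, y, z] pa Ra →
      Codes ![x, y, z] pb Rb → Consistent σ pa (m Ra) pb (m Rb) :=
    fun Ra hRa Rb hRb pa pb hpa hpb =>
      ⟨hSP.noGain_menu hji hR hrange hreal hRa hRb hpa,
        hSP.noGain_menu hji hR hrange hreal hRb hRa hpb⟩
  suffices h : m R₃ = Finset.univ by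
    have h' k : ![x, y, z] k ∈ optionSet f i (update R j R₃) (𝓡 i) :=
      mem_menu.1 (h.symm ▸ Finset.mem_univ k : k ∈ m R₃)
    refine ((optionSet_subset_scrRange (update_mem_of_ne hR hR₃)).trans hrange).antisymm ?_
    rintro a (rfl | rfl | rfl)
    exacts [h' 0, h' 1, h' 2]
  by_contra h₃
  have := (hNC j).isStrictTotalOrder hR₁
  have := (hNC j).isStrictTotalOrder hR₂
  have := (hNC j).isStrictTotalOrder hR₃
  obtain ⟨p₁, hp₁⟩ := exists_codes he R₁
  obtain ⟨p₂, hp₂⟩ := exists_codes he R₂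
  obtain ⟨p₃, hp₃⟩ := exists_codes he R₃
  obtain ⟨p₄, hp₄, hblock⟩ := exists_blocking_order σ (m R₁) (m R₂) (m R₃)
    (mem_menu.2 hy) (mem_menu.2 hz) h₃ (hadm R₁ hR₁) (hadm R₂ hR₂) (hadm R₃ hR₃) p₁ p₂ p₃
    (hcons R₁ hR₁ R₂ hR₂ p₁ p₂ hp₁ hp₂) (hcons R₁ hR₁ R₃ hR₃ p₁ p₃ hp₁ hp₃)
    (hcons R₂ hR₂ R₃ hR₃ p₂ p₃ hp₂ hp₃)
  -- `p₄` keeps every comparison shared by `R₁, R₂, R₃`, so it reverses no fixed pair of `j`.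
  obtain ⟨R₄, hR₄, hp₄R⟩ := (hNC j).exists_mem_codes he (p := p₄) fun a b hab hba =>
    (lt_asymm hab) (hp₄ b a ((hp₁ b a).2 (hba.2 _ hR₁)) ((hp₂ b a).2 (hba.2 _ hR₂))
      ((hp₃ b a).2 (hba.2 _ hR₃)))
  exact hblock (m R₄) (hadm R₄ hR₄) ⟨hcons R₄ hR₄ R₁ hR₁ p₄ p₁ hp₄R hp₁,
    hcons R₄ hR₄ R₂ hR₂ p₄ p₂ hp₄R hp₂, hcons R₄ hR₄ R₃ hR₃ p₄ p₃ hp₄R hp₃⟩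

theorem statement14_general {N X : Type*} [DecidableEq N]
    (i : N) (𝓡 𝓡' : N → Set (Pref X))
    (hAgree : ∀ j, j ≠ i → 𝓡' j = 𝓡 j)
    (hNC : ∀ j, NonConditional (𝓡 j)) (hNC' : NonConditional (𝓡' i))
    (hss : 𝓡' i ⊂ 𝓡 i) (x y : X)
    (hxy : (x, y) ∈ fixedPairs (𝓡' i))
    (hS : fixedPairs (𝓡 i) = fixedPairs (𝓡' i) \ {(x, y)})
    (f : (N → Pref X) → X) (hSP : StrategyProof 𝓡 f)
    (z : X) (hzx : z ≠ x) (hzy : z ≠ y)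
    (hrange' : scrRange 𝓡' f = {x, z})
    (hrange : scrRange 𝓡 f = {x, y, z}) :
    ∀ R : N → Pref X, (∀ j, j ≠ i → R j ∈ 𝓡 j) →
      optionSet f i R (𝓡' i) ≠ optionSet f i R (𝓡 i) →
      ∀ j, j ≠ i → ∀ Rhat ∈ 𝓡 j,
        optionSet f i (Function.update R j Rhat) (𝓡' i) = {x, z} →
        ∀ R'j ∈ 𝓡 j,
          optionSet f i (Function.update R j R'j) (𝓡' i) = scrRange 𝓡' f ∧
          optionSet f i (Function.update R j R'j) (𝓡 i) = scrRange 𝓡 f := by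
  intro R hR hO j hji Rhat hRhat hhat R'j hR'j
  have hsub := hss.subset
  have hxy' : x ≠ y := hxy.1
  obtain ⟨R₀, hR₀, -⟩ : x ∈ scrRange 𝓡' f := hrange' ▸ Set.mem_insert x {z}
  have hsub' : ∀ Q, (∀ k, k ≠ i → Q k ∈ 𝓡 k) → optionSet f i Q (𝓡' i) ⊆ {x, z} :=
    fun Q hQ => hrange' ▸ optionSet_subset_scrRange fun k hk => hAgree k hk ▸ hQ k hk
  have hS_sub : fixedPairs (𝓡 i) ⊆ fixedPairs (𝓡' i) := hS ▸ Set.sdiff_subset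
  have hz : z ∈ optionSet f i (update R j Rhat) (𝓡' i) := hhat ▸ Set.mem_insert_of_mem x rfl
  have hxz : FreePair (𝓡' i) x z := hSP.freePair_of_mem_optionSet (update_mem_of_ne hR hRhat)
    hsub (hhat ▸ Set.mem_insert x {z}) hz hzx.symm
  have hxy_free : FreePair (𝓡 i) x y :=
    ⟨hxy', by simp [hS], fun h => (hNC'.mem_fixedPairs_trans (hR₀ i) hxy (hS_sub h)).1 rfl⟩
  have hyz : (y, z) ∉ fixedPairs (𝓡 i) := fun h =>
    hxz.2.1 (hNC'.mem_fixedPairs_trans (hR₀ i) hxy (hS_sub h))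
  have hdiff : ∀ Q, (∀ k, k ≠ i → Q k ∈ 𝓡 k) →
      optionSet f i Q (𝓡' i) = optionSet f i Q (𝓡 i) \ {y} := fun Q hQ =>
    hSP.optionSet_eq_diff hQ hNC' hsub (hsub' Q hQ) (hrange ▸ optionSet_subset_scrRange hQ) hxy'
      hzy hxz
  have hyx_mem : ∀ Q, (∀ k, k ≠ i → Q k ∈ 𝓡 k) →
      y ∈ optionSet f i Q (𝓡 i) → x ∈ optionSet f i Q (𝓡 i) := fun Q hQ =>
    hSP.mem_optionSet_of_mem_of_subset_pair hQ hNC' hsub ⟨_, hR₀ i⟩ (hsub' Q hQ) hzy.symm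
      fun h => hS ▸ ⟨h, fun h' => hzx (congrArg Prod.fst h')⟩
  have hy : y ∈ optionSet f i (update R j (R j)) (𝓡 i) := by
    rw [update_eq_self]
    by_contra hy
    exact hO (by rw [hdiff R hR, Set.sdiff_singleton_eq_self hy])
  have key := hSP.optionSet_eq_triple hNC hji hR (Three.injective_vec hxy' hzx.symm hzy.symm)
    hrange.le hxy_free (hxz.of_fixedPairs_subset hS_sub) hyz hyx_mem (hR j hji) hRhat hR'j hy
    (optionSet_mono hsub hz)
  refine ⟨?_, key.trans hrange.symm⟩
  rw [hdiff _ (update_mem_of_ne hR hR'j), key, hrange',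
    Set.insert_sdiff_of_notMem _ (Set.notMem_singleton_iff.2 hxy'),
    Set.insert_sdiff_self_of_notMem (Set.notMem_singleton_iff.2 hzy.symm)]

theorem statement14 {N X : Type*} [Fintype N] [Nonempty N] [Fintype X] [DecidableEq N]
    (i : N) (𝓡 𝓡' : N → Set (Pref X))
    (hAgree : ∀ j, j ≠ i → 𝓡' j = 𝓡 j)
    (hNC : ∀ j, NonConditional (𝓡 j)) (hNC' : NonConditional (𝓡' i))
    (hss : 𝓡' i ⊂ 𝓡 i) (x y : X)
    (hxy : (x, y) ∈ fixedPairs (𝓡' i))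
    (hS : fixedPairs (𝓡 i) = fixedPairs (𝓡' i) \ {(x, y)})
    (hnoz : ¬ ∃ z, (x, z) ∈ fixedPairs (𝓡' i) ∧ (z, y) ∈ fixedPairs (𝓡' i))
    (f : (N → Pref X) → X) (hSP : StrategyProof 𝓡 f)
    (z : X) (hzx : z ≠ x) (hzy : z ≠ y)
    (hrange' : scrRange 𝓡' f = {x, z})
    (hrange : scrRange 𝓡 f = {x, y, z}) :
    ∀ R : N → Pref X, (∀ j, j ≠ i → R j ∈ 𝓡 j) →
      optionSet f i R (𝓡' i) ≠ optionSet f i R (𝓡 i) →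
      ∀ j, j ≠ i → ∀ Rhat ∈ 𝓡 j,
        optionSet f i (Function.update R j Rhat) (𝓡' i) = {x, z} →
        ∀ R'j ∈ 𝓡 j,
          optionSet f i (Function.update R j R'j) (𝓡' i) = scrRange 𝓡' f ∧
          optionSet f i (Function.update R j R'j) (𝓡 i) = scrRange 𝓡 f :=
  statement14_general i 𝓡 𝓡' hAgree hNC hNC' hss x y hxy hS f hSP z hzx hzy hrange' hrange
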